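/- Every nondegenerate conic y^2 = c1 x^2 + c2 xy + c3 y + c4 x + c5, locally solved as a smooth function y(x) with 2y - c2 x - c3 ≠ 0, satisfies the 5th order ODE 9(y'')^2 y^(5) - 45 y'' y''' y'''' + 40(y''')^3 = 0. -/

import Mathlib

set_option maxHeartbeats 1000000

theorem stmt16 (a b : ℝ) (hab : a < b) (c1 c2 c3 c4 c5 : ℝ) (y : ℝ → ℝ)
    (hy : ContDiffOn ℝ (⊤ : ℕ∞) y (Set.Ioo a b))
    (hconic : ∀ x ∈ Set.Ioo a b,
      (y x) ^ 2 = c1 * x ^ 2 + c2 * x * y x + c3 * y x + c4 * x + c5)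
    (hne : ∀ x ∈ Set.Ioo a b, 2 * y x - c2 * x - c3 ≠ 0) :
    ∀ x ∈ Set.Ioo a b,
      9 * (iteratedDerivWithin 2 y (Set.Ioo a b) x) ^ 2 *
          iteratedDerivWithin 5 y (Set.Ioo a b) x
        - 45 * iteratedDerivWithin 2 y (Set.Ioo a b) x *
            iteratedDerivWithin 3 y (Set.Ioo a b) x *
            iteratedDerivWithin 4 y (Set.Ioo a b) x
        + 40 * (iteratedDerivWithin 3 y (Set.Ioo a b) x) ^ 3 = 0 := by
  have hso : IsOpen (Set.Ioo a b) := isOpen_Ioo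
  have hsu : UniqueDiffOn ℝ (Set.Ioo a b) := hso.uniqueDiffOn
  set s := Set.Ioo a b with hs_def
  -- abbreviations
  obtain ⟨u, hu_def⟩ : ∃ u : ℝ → ℝ, u = fun t => 2 * y t - c2 * t - c3 := ⟨_, rfl⟩
  obtain ⟨A, hA_def⟩ : ∃ A : ℝ → ℝ, A = fun t => 2 * c1 * t + c2 * y t + c4 := ⟨_, rfl⟩
  obtain ⟨k, hk_def⟩ : ∃ k : ℝ, k = 2*c1*c3^2 + 8*c1*c5 + 2*c2^2*c5 - 2*c2*c3*c4 - 2*c4^2 := ⟨_, rfl⟩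
  obtain ⟨d, hd_def⟩ : ∃ d : ℝ, d = 4*c1 + c2^2 := ⟨_, rfl⟩
  obtain ⟨e, he_def⟩ : ∃ e : ℝ, e = 2*c4 + c2*c3 := ⟨_, rfl⟩
  have hune : ∀ t ∈ s, u t ≠ 0 := by
    intro t ht; simpa [hu_def] using hne t ht
  have hB : ∀ t : ℝ, d * t + e = 2 * A t - c2 * u t := by
    intro t; simp only [hu_def, hA_def, hd_def, he_def]; ring
  have hK : ∀ t ∈ s, 2*c1*(u t)^2 + 2*c2*(A t)*(u t) - 2*(A t)^2 = k := by
    intro t ht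
    simp only [hu_def, hA_def, hk_def]
    linear_combination (8*c1 + 2*c2^2) * (hconic t ht)
  have hyd : ∀ t ∈ s, HasDerivWithinAt y (derivWithin y s t) s t := fun t ht =>
    (hy.differentiableOn (by simp) t ht).hasDerivWithinAt
  -- first derivative: u * y' = A
  have key1 : ∀ t ∈ s, u t * derivWithin y s t = A t := by
    intro t ht
    have hd0 := hyd t ht
    have hid : HasDerivWithinAt (fun z : ℝ => z) 1 s t := hasDerivWithinAt_id t s
    have hF : HasDerivWithinAt
        (fun z => (y z)^2 - (c1*z^2 + c2*z*y z + c3*y z + c4*z + c5))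
        ((2:ℕ) * (y t)^(2-1) * derivWithin y s t -
          ((c1 * ((2:ℕ) * t^(2-1) * 1)) + ((c2*1) * y t + (c2*t) * derivWithin y s t)
            + c3 * derivWithin y s t + c4 * 1 + 0)) s t := by
      exact (hd0.pow 2).sub ((((((hid.pow 2).const_mul c1).add
        (((hid.const_mul c2).mul hd0))).add (hd0.const_mul c3)).add
        (hid.const_mul c4)).add (hasDerivWithinAt_const t s c5))
    have hF0 : HasDerivWithinAt
        (fun z => (y z)^2 - (c1*z^2 + c2*z*y z + c3*y z + c4*z + c5)) 0 s t := by
      have heq : Set.EqOn (fun z => (y z)^2 - (c1*z^2 + c2*z*y z + c3*y z + c4*z + c5))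
          (fun _ => (0:ℝ)) s := by
        intro z hz
        simp only [sub_eq_zero]
        exact hconic z hz
      exact (hasDerivWithinAt_const t s 0).congr heq (heq ht)
    have h1 := hF.derivWithin (hsu t ht)
    have h2 := hF0.derivWithin (hsu t ht)
    rw [h2] at h1
    simp only [hu_def, hA_def]
    push_cast at h1
    linear_combination -h1
  have eq_y1 : ∀ t ∈ s, derivWithin y s t = A t / u t := by
    intro t ht
    rw [eq_div_iff (hune t ht), mul_comm]
    exact key1 t ht
  -- derivative of u
  have hu' : ∀ t ∈ s, HasDerivWithinAt u ((d*t+e) / u t) s t := by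
    intro t ht
    have hid : HasDerivWithinAt (fun z : ℝ => z) 1 s t := hasDerivWithinAt_id t s
    have h : HasDerivWithinAt u (2 * derivWithin y s t - c2 * 1 - 0) s t :=
      hu_def ▸ ((((hyd t ht).const_mul 2).sub (hid.const_mul c2)).sub (hasDerivWithinAt_const t s c3))
    convert h using 1
    rw [div_eq_iff (hune t ht)]
    linear_combination hB t - 2 * key1 t ht
  -- derivative of A (expressed via A/u)
  have hA' : ∀ t ∈ s, HasDerivWithinAt A (2*c1 + c2 * (A t / u t)) s t := by
    intro t ht
    have hid : HasDerivWithinAt (fun z : ℝ => z) 1 s t := hasDerivWithinAt_id t s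
    have h : HasDerivWithinAt A (2*c1*1 + c2 * derivWithin y s t + 0) s t :=
      hA_def ▸ (((hid.const_mul (2*c1)).add ((hyd t ht).const_mul c2)).add (hasDerivWithinAt_const t s c4))
    convert h using 1
    rw [eq_y1 t ht]; ring
  -- second derivative formula
  have hg1' : ∀ t ∈ s, HasDerivWithinAt (fun z => A z / u z) (k / (u t)^3) s t := by
    intro t ht
    have h := (hA' t ht).div (hu' t ht) (hune t ht)
    refine h.congr_deriv (Eq.symm ?_)
    have hKt := hK t ht
    have hBt := hB t
    have h0 : u t ≠ 0 := hune t ht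
    rw [hB t]
    field_simp
    linear_combination -hKt
  have e2 : ∀ t ∈ s, iteratedDerivWithin 2 y s t = k / (u t)^3 := by
    intro t ht
    rw [iteratedDerivWithin_succ]
    have hcg : Set.EqOn (iteratedDerivWithin 1 y s) (fun z => A z / u z) s := by
      intro z hz
      rw [iteratedDerivWithin_one]
      exact eq_y1 z hz
    rw [derivWithin_congr hcg (hcg ht)]
    exact (hg1' t ht).derivWithin (hsu t ht)
  -- third derivative
  have hg2' : ∀ t ∈ s, HasDerivWithinAt (fun z => k / (u z)^3)
      (-3*k*(d*t+e) / (u t)^5) s t := by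
    intro t ht
    have hp : HasDerivWithinAt (fun z => (u z)^3) ((3:ℕ) * (u t)^(3-1) * ((d*t+e)/u t)) s t :=
      (hu' t ht).pow 3
    have h := (hasDerivWithinAt_const t s k).div hp (pow_ne_zero 3 (hune t ht))
    refine h.congr_deriv (Eq.symm ?_)
    have h0 : u t ≠ 0 := hune t ht
    field_simp
    ring
  have e3 : ∀ t ∈ s, iteratedDerivWithin 3 y s t = -3*k*(d*t+e) / (u t)^5 := by
    intro t ht
    rw [show (3:ℕ) = 2 + 1 from rfl, iteratedDerivWithin_succ]
    rw [derivWithin_congr (fun z hz => e2 z hz) (e2 t ht)]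
    exact (hg2' t ht).derivWithin (hsu t ht)
  -- fourth derivative
  have hg3' : ∀ t ∈ s, HasDerivWithinAt (fun z => -3*k*(d*z+e) / (u z)^5)
      (-3*k*d/(u t)^5 + 15*k*(d*t+e)^2/(u t)^7) s t := by
    intro t ht
    have hid : HasDerivWithinAt (fun z : ℝ => z) 1 s t := hasDerivWithinAt_id t s
    have hnum : HasDerivWithinAt (fun z => -3*k*(d*z+e)) (-3*k*(d*1+0)) s t :=
      ((hid.const_mul d).add (hasDerivWithinAt_const t s e)).const_mul (-3*k)
    have hp : HasDerivWithinAt (fun z => (u z)^5) ((5:ℕ) * (u t)^(5-1) * ((d*t+e)/u t)) s t :=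
      (hu' t ht).pow 5
    have h := hnum.div hp (pow_ne_zero 5 (hune t ht))
    refine h.congr_deriv (Eq.symm ?_)
    have h0 : u t ≠ 0 := hune t ht
    field_simp
    ring
  have e4 : ∀ t ∈ s, iteratedDerivWithin 4 y s t
      = -3*k*d/(u t)^5 + 15*k*(d*t+e)^2/(u t)^7 := by
    intro t ht
    rw [show (4:ℕ) = 3 + 1 from rfl, iteratedDerivWithin_succ]
    rw [derivWithin_congr (fun z hz => e3 z hz) (e3 t ht)]
    exact (hg3' t ht).derivWithin (hsu t ht)
  -- fifth derivative
  have hg4' : ∀ t ∈ s, HasDerivWithinAt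
      (fun z => -3*k*d/(u z)^5 + 15*k*(d*z+e)^2/(u z)^7)
      (45*k*d*(d*t+e)/(u t)^7 - 105*k*(d*t+e)^3/(u t)^9) s t := by
    intro t ht
    have hid : HasDerivWithinAt (fun z : ℝ => z) 1 s t := hasDerivWithinAt_id t s
    have haff : HasDerivWithinAt (fun z : ℝ => d*z+e) (d*1+0) s t :=
      (hid.const_mul d).add (hasDerivWithinAt_const t s e)
    have hp5 : HasDerivWithinAt (fun z => (u z)^5) ((5:ℕ) * (u t)^(5-1) * ((d*t+e)/u t)) s t :=
      (hu' t ht).pow 5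
    have hp7 : HasDerivWithinAt (fun z => (u z)^7) ((7:ℕ) * (u t)^(7-1) * ((d*t+e)/u t)) s t :=
      (hu' t ht).pow 7
    have hnum2 : HasDerivWithinAt (fun z => 15*k*(d*z+e)^2)
        (15*k*((2:ℕ) * (d*t+e)^(2-1) * (d*1+0))) s t :=
      (haff.pow 2).const_mul (15*k)
    have h := ((hasDerivWithinAt_const t s (-3*k*d)).div hp5 (pow_ne_zero 5 (hune t ht))).add
      (hnum2.div hp7 (pow_ne_zero 7 (hune t ht)))
    refine h.congr_deriv (Eq.symm ?_)
    have h0 : u t ≠ 0 := hune t ht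
    field_simp
    ring
  have e5 : ∀ t ∈ s, iteratedDerivWithin 5 y s t
      = 45*k*d*(d*t+e)/(u t)^7 - 105*k*(d*t+e)^3/(u t)^9 := by
    intro t ht
    rw [show (5:ℕ) = 4 + 1 from rfl, iteratedDerivWithin_succ]
    rw [derivWithin_congr (fun z hz => e4 z hz) (e4 t ht)]
    exact (hg4' t ht).derivWithin (hsu t ht)
  -- final computation
  intro x hx
  rw [e2 x hx, e3 x hx, e4 x hx, e5 x hx]
  have h0 : u x ≠ 0 := hune x hx
  field_simp
  ring
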